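/- arXiv:2305.08359 — 3 statements merged into one kernel-verified Lean document; each statement's English description precedes it below -/
import Mathlib

section
/- Suppose A, B ∈ ℝ^{d×d} are positive definite matrices with A ⪰ B (i.e., A − B is positive semidefinite). Then for any x ∈ ℝ^d, ‖x‖_A ≤ ‖x‖_B · √(det(A)/det(B)), where ‖x‖_M = √(xᵀ M x). -/
open scoped Matrix
open Matrix

lemma eig_ge_one {d : ℕ} {M : Matrix (Fin d) (Fin d) ℝ} (h1 : (M - 1).PosSemidef)
    {lam : ℝ} {v : Fin d → ℝ} (hv : M *ᵥ v = lam • v) (hn : v ⬝ᵥ v = 1) : 1 ≤ lam := by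
  have h := h1.dotProduct_mulVec_nonneg v
  rw [sub_mulVec, hv, one_mulVec] at h
  simp only [star_trivial, dotProduct_sub, dotProduct_smul, smul_eq_mul,
    RCLike.re_to_real] at h
  rw [hn, mul_one] at h
  linarith

lemma key {d : ℕ} (M : Matrix (Fin d) (Fin d) ℝ) (hM : M.IsHermitian)
    (h1 : (M - 1).PosSemidef) (y : Fin d → ℝ) :
    y ⬝ᵥ M.mulVec y ≤ (y ⬝ᵥ y) * M.det := by
  set lam := hM.eigenvalues with hlam
  have hnorm : ∀ i, (⇑(hM.eigenvectorBasis i) : Fin d → ℝ) ⬝ᵥ ⇑(hM.eigenvectorBasis i) = 1 := by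
    intro i
    have h := hM.eigenvectorBasis.orthonormal.1 i
    rw [EuclideanSpace.norm_eq, Real.sqrt_eq_one] at h
    simpa [dotProduct, Real.norm_eq_abs, sq_abs, pow_two] using h
  have hge1 : ∀ i, 1 ≤ lam i := fun i =>
    eig_ge_one h1 (hM.mulVec_eigenvectorBasis i) (hnorm i)
  have hdet : M.det = ∏ i, lam i := by
    have := hM.det_eq_prod_eigenvalues
    simpa using this
  set U : Matrix (Fin d) (Fin d) ℝ := (hM.eigenvectorUnitary : Matrix (Fin d) (Fin d) ℝ) with hU
  have hUU : U * star U = 1 := mem_unitaryGroup_iff.mp hM.eigenvectorUnitary.2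
  have hstarU : star U = Uᵀ := by
    rw [Matrix.star_eq_conjTranspose, conjTranspose_eq_transpose_of_trivial]
  set c := star U *ᵥ y with hc
  have hyy : y ⬝ᵥ y = c ⬝ᵥ c := by
    rw [hc, dotProduct_mulVec, ← mulVec_transpose, hstarU, transpose_transpose,
      mulVec_mulVec, ← hstarU, hUU, one_mulVec]
  have hform : y ⬝ᵥ M.mulVec y = ∑ i, lam i * (c i)^2 := by
    conv_lhs => rw [hM.spectral_theorem, Unitary.conjStarAlgAut_apply]
    rw [← Matrix.mulVec_mulVec, ← Matrix.mulVec_mulVec, dotProduct_mulVec,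
      ← mulVec_transpose, ← hstarU, ← hc]
    simp only [dotProduct, mulVec_diagonal, Function.comp, RCLike.ofReal_real_eq_id, id_eq]
    exact Finset.sum_congr rfl fun i _ => by rw [hlam]; ring
  have hprodle : ∀ i, lam i ≤ ∏ j, lam j := by
    intro i
    calc lam i = lam i * 1 := (mul_one _).symm
      _ ≤ lam i * ∏ j ∈ Finset.univ.erase i, lam j := by
          have hp : (1:ℝ) ≤ ∏ j ∈ Finset.univ.erase i, lam j := by
            have := Finset.prod_le_prod (s := Finset.univ.erase i) (f := fun _ => (1:ℝ)) (g := lam)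
              (fun _ _ => zero_le_one) (fun j _ => hge1 j)
            simpa using this
          exact mul_le_mul_of_nonneg_left hp (by linarith [hge1 i])
      _ = ∏ j, lam j := Finset.mul_prod_erase _ _ (Finset.mem_univ i)
  calc y ⬝ᵥ M.mulVec y = ∑ i, lam i * (c i)^2 := hform
    _ ≤ ∑ i, (∏ j, lam j) * (c i)^2 :=
        Finset.sum_le_sum fun i _ => mul_le_mul_of_nonneg_right (hprodle i) (sq_nonneg _)
    _ = (c ⬝ᵥ c) * M.det := by
        rw [← Finset.mul_sum, hdet, mul_comm]
        simp [dotProduct, pow_two]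
    _ = (y ⬝ᵥ y) * M.det := by rw [hyy]

open scoped MatrixOrder

/-- If `A ⪰ B ≻ 0`, then `‖x‖_A ≤ ‖x‖_B √(det A / det B)`. -/
theorem stmt_3 {d : ℕ} (A B : Matrix (Fin d) (Fin d) ℝ)
    (hA : A.PosDef) (hB : B.PosDef) (hAB : (A - B).PosSemidef)
    (x : Fin d → ℝ) :
    Real.sqrt (x ⬝ᵥ A.mulVec x) ≤
      Real.sqrt (x ⬝ᵥ B.mulVec x) * Real.sqrt (A.det / B.det) := by
  have hS := hB.posSemidef
  set S := CFC.sqrt B with hSdef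
  have hSps : S.PosSemidef := Matrix.nonneg_iff_posSemidef.mp (CFC.sqrt_nonneg B)
  have hSS : S * S = B := CFC.sqrt_mul_sqrt_self B (Matrix.nonneg_iff_posSemidef.mpr hS)
  have hdetS : S.det * S.det = B.det := by rw [← det_mul, hSS]
  have hdetSne : S.det ≠ 0 := by
    intro h
    rw [h, mul_zero] at hdetS
    exact hB.det_pos.ne' hdetS.symm
  have hSunit : IsUnit S.det := hdetSne.isUnit
  have hSinv : S⁻¹ * S = 1 := nonsing_inv_mul S hSunit
  have hSinv' : S * S⁻¹ = 1 := mul_nonsing_inv S hSunit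
  have hSH : S⁻¹.IsHermitian := hSps.1.inv
  set M := S⁻¹ * A * S⁻¹ with hMdef
  have hMH : M.IsHermitian := by
    have := Matrix.isHermitian_conjTranspose_mul_mul S⁻¹ hA.isHermitian
    rwa [hSH.eq] at this
  have hB1 : S⁻¹ * B * S⁻¹ = 1 := by
    rw [← hSS, ← Matrix.mul_assoc, hSinv, Matrix.one_mul, hSinv']
  have hM1 : (M - 1).PosSemidef := by
    have h := hAB.conjTranspose_mul_mul_same S⁻¹
    rw [hSH.eq] at h
    have e : S⁻¹ * (A - B) * S⁻¹ = M - 1 := by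
      rw [Matrix.mul_sub, Matrix.sub_mul, hB1, hMdef]
    rwa [e] at h
  have hdetM : M.det = A.det / B.det := by
    rw [hMdef, det_mul, det_mul, det_nonsing_inv, Ring.inverse_eq_inv', ← hdetS]
    field_simp
  have hST : Sᵀ = S := by
    rw [← conjTranspose_eq_transpose_of_trivial, hSps.1.eq]
  have hvm : ∀ v : Fin d → ℝ, vecMul v S = S *ᵥ v := by
    intro v
    rw [← mulVec_transpose, hST]
  have hxA : x ⬝ᵥ A.mulVec x = (S *ᵥ x) ⬝ᵥ M.mulVec (S *ᵥ x) := by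
    have hA' : A = S * M * S := by
      rw [hMdef, ← Matrix.mul_assoc, ← Matrix.mul_assoc, hSinv', Matrix.one_mul,
        Matrix.mul_assoc, hSinv, Matrix.mul_one]
    conv_lhs => rw [hA']
    rw [← mulVec_mulVec, ← mulVec_mulVec, dotProduct_mulVec, hvm]
  have hxB : x ⬝ᵥ B.mulVec x = (S *ᵥ x) ⬝ᵥ (S *ᵥ x) := by
    conv_lhs => rw [← hSS]
    rw [← mulVec_mulVec, dotProduct_mulVec, hvm]
  have hmain : x ⬝ᵥ A.mulVec x ≤ (x ⬝ᵥ B.mulVec x) * (A.det / B.det) := by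
    rw [hxA, hxB, ← hdetM]
    exact key M hMH hM1 (S *ᵥ x)
  have h0B : 0 ≤ x ⬝ᵥ B.mulVec x := by
    have := hB.posSemidef.dotProduct_mulVec_nonneg x
    simpa using this
  calc Real.sqrt (x ⬝ᵥ A.mulVec x)
      ≤ Real.sqrt ((x ⬝ᵥ B.mulVec x) * (A.det / B.det)) := Real.sqrt_le_sqrt hmain
    _ = Real.sqrt (x ⬝ᵥ B.mulVec x) * Real.sqrt (A.det / B.det) := Real.sqrt_mul h0B _
end

section
/- Let λ₁, λ₂, λ₄ > 0, λ₃ ≥ 1, and κ = max{⌈log₂ λ₁⌉, 1}. Let a₁,…,a_κ be nonnegative reals such that a_i ≤ min{λ₁, λ₂·√(a_i + a_{i+1} + 2^{i+1}λ₃) + λ₄} for all 1 ≤ i ≤ κ, where a_{κ+1} = λ₁. Then a₁ ≤ 22λ₂² + 6λ₄ + 4λ₂√(2λ₃). -/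
lemma quadbound (l2 l4 x c : ℝ) (h2 : 0 < l2) (h4 : 0 < l4) (hx : 0 ≤ x) (hc : 0 ≤ c)
    (h : x ≤ l2 * Real.sqrt (x + c) + l4) :
    x ≤ 4*l2^2 + 2*l2*Real.sqrt c + 2*l4 := by
  have hsc0 : 0 ≤ Real.sqrt c := Real.sqrt_nonneg _
  rcases le_or_gt x (2*l4) with h'|h'
  · nlinarith [mul_nonneg h2.le hsc0]
  · have hxc : (0:ℝ) ≤ x + c := by linarith
    have hs : Real.sqrt (x+c) ^ 2 = x + c := Real.sq_sqrt hxc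
    have hs0 : 0 ≤ Real.sqrt (x+c) := Real.sqrt_nonneg _
    have hsc : Real.sqrt c ^ 2 = c := Real.sq_sqrt hc
    have h1 : (x - l4)^2 ≤ (l2 * Real.sqrt (x+c))^2 := by
      have hl : 0 ≤ x - l4 := by linarith
      have h'' : x - l4 ≤ l2 * Real.sqrt (x+c) := by linarith
      exact pow_le_pow_left₀ hl h'' 2
    have h2' : x^2 ≤ 4*l2^2*x + 4*l2^2*c := by nlinarith [h1, hs]
    nlinarith [sq_nonneg (x - 2*l2^2 - 2*l2*Real.sqrt c),
      mul_nonneg (mul_nonneg (mul_nonneg h2.le h2.le) h2.le) hsc0, hsc]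

lemma stepbound (l2 l4 x y t : ℝ) (h2 : 0 < l2) (h4 : 0 < l4) (ht : 0 < t)
    (hx : 0 ≤ x) (hy0 : 0 ≤ y)
    (hr : x ≤ l2 * Real.sqrt (x + y + 2*t) + l4)
    (hy : y ≤ 22*l2^2 + 3*l4 + 4*l2*Real.sqrt (2*t) + t) :
    x ≤ 22*l2^2 + 3*l4 + 4*l2*Real.sqrt t := by
  have hst : Real.sqrt t ^ 2 = t := Real.sq_sqrt ht.le
  have hst0 : 0 ≤ Real.sqrt t := Real.sqrt_nonneg _
  have hs2t : Real.sqrt (2*t) ^ 2 = 2*t := Real.sq_sqrt (by linarith)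
  have hs2t0 : 0 ≤ Real.sqrt (2*t) := Real.sqrt_nonneg _
  -- 4 l2 √(2t) ≤ 8 l2² + t
  have hkey : 4*l2*Real.sqrt (2*t) ≤ 8*l2^2 + t := by
    nlinarith [sq_nonneg (4*l2 - Real.sqrt (2*t))]
  have hc : y + 2*t ≤ 30*l2^2 + 3*l4 + 4*t := by linarith
  have hq : x ≤ 4*l2^2 + 2*l2*Real.sqrt (y + 2*t) + 2*l4 := by
    apply quadbound l2 l4 x (y + 2*t) h2 h4 hx (by linarith)
    have : x + (y + 2*t) = x + y + 2*t := by ring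
    rw [this]; exact hr
  have hsl4 : Real.sqrt (3*l4) ^ 2 = 3*l4 := Real.sq_sqrt (by linarith)
  have hsl40 : 0 ≤ Real.sqrt (3*l4) := Real.sqrt_nonneg _
  have hsqc : Real.sqrt (y + 2*t) ≤ 5.5*l2 + Real.sqrt (3*l4) + 2*Real.sqrt t := by
    have hrhs : 0 ≤ 5.5*l2 + Real.sqrt (3*l4) + 2*Real.sqrt t := by positivity
    have hle : y + 2*t ≤ (5.5*l2 + Real.sqrt (3*l4) + 2*Real.sqrt t)^2 := by
      nlinarith [mul_nonneg h2.le hsl40, mul_nonneg h2.le hst0, mul_nonneg hsl40 hst0]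
    calc Real.sqrt (y + 2*t) ≤ Real.sqrt ((5.5*l2 + Real.sqrt (3*l4) + 2*Real.sqrt t)^2) :=
          Real.sqrt_le_sqrt hle
      _ = 5.5*l2 + Real.sqrt (3*l4) + 2*Real.sqrt t := Real.sqrt_sq hrhs
  have hmul := mul_le_mul_of_nonneg_left hsqc (by positivity : (0:ℝ) ≤ 2*l2)
  have hcross : 2*l2*Real.sqrt (3*l4) ≤ 3*l2^2 + l4 := by
    nlinarith [sq_nonneg (3*l2 - Real.sqrt (3*l4))]
  nlinarith [hq, hmul, hcross, mul_nonneg h2.le hst0, sq_nonneg l2]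


/-- Recursive sequence bound (Lemma 12 of Zhang et al. 2021). -/
theorem stmt_4 (l1 l2 l3 l4 : ℝ) (h1 : 0 < l1) (h2 : 0 < l2) (h4 : 0 < l4)
    (h3 : 1 ≤ l3) (κ : ℕ) (hκ : κ = max ⌈Real.logb 2 l1⌉₊ 1)
    (a : ℕ → ℝ)
    (ha0 : ∀ i, 1 ≤ i → i ≤ κ → 0 ≤ a i)
    (haend : a (κ + 1) = l1)
    (hrec : ∀ i, 1 ≤ i → i ≤ κ →
      a i ≤ min l1 (l2 * Real.sqrt (a i + a (i + 1) + 2 ^ (i + 1) * l3) + l4)) :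
    a 1 ≤ 22 * l2 ^ 2 + 6 * l4 + 4 * l2 * Real.sqrt (2 * l3) := by
  have hκ1 : 1 ≤ κ := hκ ▸ le_max_right _ _
  -- l1 ≤ 2^κ
  have hl1pow : l1 ≤ (2:ℝ)^κ := by
    rcases le_or_gt l1 1 with h|h
    · have : (1:ℝ) ≤ 2^κ := one_le_pow₀ (by norm_num)
      linarith
    · have hlog : Real.logb 2 l1 ≤ (κ:ℝ) := by
        refine le_trans (Nat.le_ceil _) ?_
        exact_mod_cast Nat.cast_le.mpr (hκ ▸ le_max_left _ _)
      calc l1 = (2:ℝ) ^ (Real.logb 2 l1) := (Real.rpow_logb (by norm_num) (by norm_num) h1).symm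
        _ ≤ (2:ℝ) ^ ((κ:ℝ)) := Real.rpow_le_rpow_of_exponent_le (by norm_num) hlog
        _ = (2:ℝ) ^ κ := Real.rpow_natCast 2 κ
  have hl1 : l1 ≤ 2^κ * l3 := by
    have hp : (0:ℝ) < 2^κ := by positivity
    nlinarith
  -- nonnegativity including κ+1
  have ha0' : ∀ i, 1 ≤ i → i ≤ κ + 1 → 0 ≤ a i := by
    intro i hi1 hi2
    rcases Nat.lt_or_ge i (κ+1) with h|h
    · exact ha0 i hi1 (by omega)
    · have : i = κ + 1 := by omega
      rw [this, haend]; exact h1.le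
  -- single step
  have main_step : ∀ i, 1 ≤ i → i ≤ κ →
      a (i+1) ≤ 22*l2^2 + 3*l4 + 4*l2*Real.sqrt (2*(2^i*l3)) + 2^i*l3 →
      a i ≤ 22*l2^2 + 3*l4 + 4*l2*Real.sqrt (2^i*l3) := by
    intro i hi1 hiκ hnext
    have ht : (0:ℝ) < 2^i * l3 := by positivity
    refine stepbound l2 l4 (a i) (a (i+1)) (2^i*l3) h2 h4 ht
      (ha0 i hi1 hiκ) (ha0' (i+1) (by omega) (by omega)) ?_ hnext
    have := (hrec i hi1 hiκ).trans (min_le_right _ _)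
    have harg : a i + a (i+1) + 2^(i+1)*l3 = a i + a (i+1) + 2*(2^i*l3) := by ring
    rwa [harg] at this
  -- base: i = κ
  have hbase : a κ ≤ 22*l2^2 + 3*l4 + 4*l2*Real.sqrt (2^κ*l3) := by
    apply main_step κ hκ1 le_rfl
    rw [haend]
    have s1 : 0 ≤ Real.sqrt (2*(2^κ*l3)) := Real.sqrt_nonneg _
    nlinarith [mul_nonneg h2.le s1]
  -- downward induction
  have key : ∀ d i, 1 ≤ i → i ≤ κ → κ ≤ i + d →
      a i ≤ 22*l2^2 + 3*l4 + 4*l2*Real.sqrt (2^i*l3) := by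
    intro d
    induction d with
    | zero =>
      intro i hi1 hiκ hκi
      have : i = κ := by omega
      rw [this]; exact hbase
    | succ d ih =>
      intro i hi1 hiκ hκi
      rcases eq_or_lt_of_le hiκ with heq|hlt
      · rw [heq]; exact hbase
      · apply main_step i hi1 hiκ
        have := ih (i+1) (by omega) (by omega) (by omega)
        have harg : (2:ℝ)^(i+1)*l3 = 2*(2^i*l3) := by ring
        rw [harg] at this
        have ht : (0:ℝ) < 2^i * l3 := by positivity
        linarith
  have hfin := key κ 1 le_rfl hκ1 (by omega)
  have : (2:ℝ)^(1:ℕ) * l3 = 2 * l3 := by norm_num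
  rw [this] at hfin
  linarith
end

section
/- Fix finite sets S, A, a horizon H, feature maps φ(s'|s,a) ∈ ℝ^d, a positive definite matrix Σ ∈ ℝ^{d×d}, a vector θ̂ ∈ ℝ^d, and β > 0. Let C = {θ ∈ ℝ^d : ‖Σ^{1/2}(θ − θ̂)‖₂ ≤ β}. Define D as the set of z = {z_h : S × A × S → ℝ_{≥0}}_{h=1}^H satisfying: the linear flow constraints Σ_{a,s'} z_h(s,a,s') = Σ_{a,s'} z_{h−1}(s',a,s) for h ∈ {2,…,H}; the initial constraints Σ_{a,s'} z_1(s,a,s') = 𝟙{s = s₁}; and, for every (s,a,h) with Σ_y z_h(s,a,y) > 0, there exists θ̄ ∈ C such that z_h(s,a,s')/Σ_y z_h(s,a,y) = ⟨θ̄, φ(s'|s,a)⟩ for all s'. Then D is a convex set. -/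
/-!
The flow and initial constraints are linear, so they cut out convex sets. The model constraint on a
row `z_h(s, a, ·)`, together with nonnegativity, describes a convex cone: if `v` and `w` have
positive masses `V`, `W` and witnesses `θ`, `θ'`, then `v + w` has the witness
`(V θ + W θ') / (V + W)`, which stays in the confidence ellipsoid because the ellipsoid is convex
and `θ ↦ ⟨θ, φ(s' | s, a)⟩` is linear.
-/

open Finset
open scoped Matrix MatrixOrder

section

variable {ι E : Type*} [Fintype ι] [AddCommGroup E] [Module ℝ E]

def normalizedImageCone {C : Set E} (hC : Convex ℝ C) {f : E → ι → ℝ} (hf : IsLinearMap ℝ f) :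
    ConvexCone ℝ (ι → ℝ) where
  carrier := {v | 0 ≤ v ∧ (0 < ∑ i, v i → ∃ x ∈ C, ∀ i, v i / ∑ j, v j = f x i)}
  smul_mem' := by
    rintro c hc v ⟨hv0, hvC⟩
    have hsum : ∑ i, (c • v) i = c * ∑ i, v i := by simp only [Pi.smul_apply, smul_eq_mul, mul_sum]
    refine ⟨smul_nonneg hc.le hv0, fun hpos => ?_⟩
    obtain ⟨x, hx, hxv⟩ := hvC (pos_of_mul_pos_right (hsum ▸ hpos) hc.le)
    refine ⟨x, hx, fun i => ?_⟩
    rw [hsum, Pi.smul_apply, smul_eq_mul, mul_div_mul_left _ _ hc.ne', hxv]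
  add_mem' := by
    rintro v ⟨hv0, hvC⟩ w ⟨hw0, hwC⟩
    refine ⟨add_nonneg hv0 hw0, fun hpos => ?_⟩
    rcases (sum_nonneg fun i _ => hv0 i).eq_or_lt with hV | hV
    · obtain rfl : v = 0 := (Fintype.sum_eq_zero_iff_of_nonneg hv0).mp hV.symm
      simpa using hwC (by simpa using hpos)
    rcases (sum_nonneg fun i _ => hw0 i).eq_or_lt with hW | hW
    · obtain rfl : w = 0 := (Fintype.sum_eq_zero_iff_of_nonneg hw0).mp hW.symm
      simpa using hvC (by simpa using hpos)
    obtain ⟨x, hx, hxv⟩ := hvC hV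
    obtain ⟨y, hy, hyw⟩ := hwC hW
    set V := ∑ i, v i
    set W := ∑ i, w i
    refine ⟨(V / (V + W)) • x + (W / (V + W)) • y,
      hC hx hy (by positivity) (by positivity) (by field_simp), fun i => ?_⟩
    simp only [hf.map_add, hf.map_smul, Pi.add_apply, Pi.smul_apply, smul_eq_mul, ← hxv, ← hyw,
      sum_add_distrib]
    change (v i + w i) / (V + W) = _
    field_simp

end

theorem convex_setOf_sqrt_dotProduct_mulVec_sub_le {m n : Type*} [Fintype m] [Fintype n]
    (M : Matrix m n ℝ) (c : n → ℝ) (β : ℝ) :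
    Convex ℝ {θ | √((M *ᵥ (θ - c)) ⬝ᵥ (M *ᵥ (θ - c))) ≤ β} := by
  have hball : {θ | √((M *ᵥ (θ - c)) ⬝ᵥ (M *ᵥ (θ - c))) ≤ β} =
      ((WithLp.linearEquiv 2 ℝ (m → ℝ)).symm.toLinearMap ∘ₗ M.mulVecLin) ⁻¹'
        Metric.closedBall (WithLp.toLp 2 (M *ᵥ c)) β := by
    ext θ
    simp [EuclideanSpace.dist_eq, Matrix.mulVec_sub, dotProduct, Real.dist_eq, sq]
  rw [hball]
  exact (convex_closedBall _ _).linear_preimage _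

theorem stmt_6_general {S A : Type*} [Fintype S] [Fintype A] [DecidableEq S]
    (H d : ℕ) (φ : S → S → A → (Fin d → ℝ))
    (Sig : Matrix (Fin d) (Fin d) ℝ)
    (θhat : Fin d → ℝ) (β : ℝ) (s₁ : S) :
    Convex ℝ {zf : ℕ → S → A → S → ℝ |
      (∀ h s a s', zf h s a s' ≥ 0) ∧
      (∀ h, 2 ≤ h → h ≤ H → ∀ s : S,
        ∑ a, ∑ s', zf h s a s' = ∑ a, ∑ s', zf (h - 1) s' a s) ∧
      (∀ s : S, ∑ a, ∑ s', zf 1 s a s' = if s = s₁ then 1 else 0) ∧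
      (∀ (s : S) (a : A) (h : ℕ), 1 ≤ h → h ≤ H → 0 < ∑ y, zf h s a y →
        ∃ θbar : Fin d → ℝ,
          Real.sqrt (((CFC.sqrt Sig).mulVec (θbar - θhat)) ⬝ᵥ
              ((CFC.sqrt Sig).mulVec (θbar - θhat))) ≤ β ∧
          ∀ s' : S, zf h s a s' / ∑ y, zf h s a y = θbar ⬝ᵥ φ s' s a)} := by
  intro z ⟨hz0, hzflow, hzinit, hzC⟩ w ⟨hw0, hwflow, hwinit, hwC⟩ a b ha hb hab
  have hC := convex_setOf_sqrt_dotProduct_mulVec_sub_le (CFC.sqrt Sig) θhat β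
  refine ⟨fun h s c s' => add_nonneg (mul_nonneg ha (hz0 h s c s')) (mul_nonneg hb (hw0 h s c s')),
    fun h h2 hH s => ?_, fun s => ?_, fun s c h h1 hH => ?_⟩
  · simp only [Pi.add_apply, Pi.smul_apply, smul_eq_mul, sum_add_distrib, ← mul_sum,
      hzflow h h2 hH s, hwflow h h2 hH s]
  · simp only [Pi.add_apply, Pi.smul_apply, smul_eq_mul, sum_add_distrib, ← mul_sum,
      hzinit s, hwinit s, ← add_mul, hab, one_mul]
  · have hφ : IsLinearMap ℝ fun θ s' => θ ⬝ᵥ φ s' s c :=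
      ⟨fun θ θ' => funext fun _ => add_dotProduct θ θ' _,
        fun r θ => funext fun _ => smul_dotProduct r θ _⟩
    exact ((normalizedImageCone hC hφ).convex ⟨hz0 h s c, hzC s c h h1 hH⟩
      ⟨hw0 h s c, hwC s c h h1 hH⟩ ha hb hab).2

/-- Convexity of the feasible occupancy-measure set `D_k` (Lemma 2 in the paper).
The confidence set `C` is the ellipsoid `{θ : ‖Σ^{1/2}(θ − θ̂)‖₂ ≤ β}`. -/
theorem stmt_6 {S A : Type*} [Fintype S] [Fintype A] [DecidableEq S]
    (H d : ℕ) (φ : S → S → A → (Fin d → ℝ))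
    (Sig : Matrix (Fin d) (Fin d) ℝ) (hSig : Sig.PosDef)
    (θhat : Fin d → ℝ) (β : ℝ) (hβ : 0 < β) (s₁ : S) :
    Convex ℝ {zf : ℕ → S → A → S → ℝ |
      (∀ h s a s', zf h s a s' ≥ 0) ∧
      (∀ h, 2 ≤ h → h ≤ H → ∀ s : S,
        ∑ a, ∑ s', zf h s a s' = ∑ a, ∑ s', zf (h - 1) s' a s) ∧
      (∀ s : S, ∑ a, ∑ s', zf 1 s a s' = if s = s₁ then 1 else 0) ∧
      (∀ (s : S) (a : A) (h : ℕ), 1 ≤ h → h ≤ H → 0 < ∑ y, zf h s a y →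
        ∃ θbar : Fin d → ℝ,
          Real.sqrt (((CFC.sqrt Sig).mulVec (θbar - θhat)) ⬝ᵥ
              ((CFC.sqrt Sig).mulVec (θbar - θhat))) ≤ β ∧
          ∀ s' : S, zf h s a s' / ∑ y, zf h s a y = θbar ⬝ᵥ φ s' s a)} :=
  stmt_6_general H d φ Sig θhat β s₁
end
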